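/- arXiv:0912.0713 — 3 statements merged into one kernel-verified Lean document; each statement's English description precedes it below -/
import Mathlib

section
/- If X ⊆ ℝⁿ is the union of the graphs of finitely many Lipschitz functions ξ₁, …, ξ_k : ℝ^{n-1} → ℝ, then there exist Lipschitz functions θ₁ ≤ θ₂ ≤ … ≤ θ_k : ℝ^{n-1} → ℝ such that X equals the union of the graphs of θ₁, …, θ_k. -/
/-!
Take θᵢ(x) to be the `i`-th smallest of the values ξ₁(x), …, ξₖ(x). Sorting keeps the set of
values, so the graphs have the same union. The `i`-th order statistic is 1-Lipschitz for the sup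
distance: if `a ≤ b + c` coordinatewise, the `i + 1` coordinates of `b` that are at most its `i`-th
order statistic give `i + 1` coordinates of `a` at most that value plus `c`.
-/

open scoped NNReal

theorem LipschitzWith.pi {α ι : Type*} {β : ι → Type*} [PseudoEMetricSpace α] [Fintype ι]
    [∀ i, PseudoEMetricSpace (β i)] {K : ℝ≥0} {f : ∀ i, α → β i}
    (hf : ∀ i, LipschitzWith K (f i)) : LipschitzWith K fun x i => f i x :=
  fun x y => edist_pi_le_iff.2 fun i => hf i x y

namespace Tuple

open Finset

variable {n : ℕ} {α : Type*}

def orderStat [LinearOrder α] (a : Fin n → α) : Fin n → α := a ∘ sort a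

section LinearOrder

variable [LinearOrder α] (a : Fin n → α)

theorem monotone_orderStat : Monotone (orderStat a) := monotone_sort a

theorem range_orderStat : Set.range (orderStat a) = Set.range a :=
  (sort a).surjective.range_comp a

theorem orderStat_le_iff {r : Fin n} {t : α} : orderStat a r ≤ t ↔ r < #{i | a i ≤ t} := by
  have : #{i | orderStat a i ≤ t} = #{i | a i ≤ t} :=
    card_equiv (sort a) fun i => by rw [mem_filter_univ, mem_filter_univ]; rfl
  rw [← this, lt_card_le_iff_apply_le_of_monotone (monotone_orderStat a)]

end LinearOrder

theorem orderStat_le_orderStat_add [AddCommGroup α] [LinearOrder α] [IsOrderedAddMonoid α]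
    {a b : Fin n → α} {c : α} (h : ∀ i, a i ≤ b i + c) (r : Fin n) :
    orderStat a r ≤ orderStat b r + c := by
  rw [orderStat_le_iff]
  refine ((orderStat_le_iff b).1 le_rfl).trans_le (card_le_card fun i => ?_)
  simp only [mem_filter_univ]
  exact fun hi => (h i).trans (by gcongr)

theorem lipschitzWith_orderStat (r : Fin n) :
    LipschitzWith 1 fun a : Fin n → ℝ => orderStat a r :=
  LipschitzWith.of_le_add fun a b =>
    orderStat_le_orderStat_add
      (fun i => sub_le_iff_le_add'.1 ((le_abs_self _).trans (dist_le_pi_dist a b i))) r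

end Tuple

/-- If X ⊆ ℝⁿ = ℝ^{n-1} × ℝ is a union of graphs of finitely many Lipschitz
functions ξ₁,…,ξ_k, then it is also the union of graphs of an ordered (pointwise
nondecreasing) family of Lipschitz functions θ₁ ≤ … ≤ θ_k. -/
theorem stmt2 {m k : ℕ} (ξ : Fin k → EuclideanSpace ℝ (Fin m) → ℝ)
    (hξ : ∀ i, ∃ N : ℝ≥0, LipschitzWith N (ξ i)) :
    ∃ θ : Fin k → EuclideanSpace ℝ (Fin m) → ℝ,
      (∀ i, ∃ N : ℝ≥0, LipschitzWith N (θ i)) ∧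
      (∀ i j : Fin k, i ≤ j → ∀ x, θ i x ≤ θ j x) ∧
      (⋃ i, {p : EuclideanSpace ℝ (Fin m) × ℝ | p.2 = ξ i p.1}) =
        (⋃ i, {p : EuclideanSpace ℝ (Fin m) × ℝ | p.2 = θ i p.1}) := by
  choose N hN using hξ
  have hξ_pi : LipschitzWith (Finset.univ.sup N) fun x j => ξ j x :=
    LipschitzWith.pi fun j => (hN j).weaken (Finset.le_sup (Finset.mem_univ j))
  refine ⟨fun i x => Tuple.orderStat (fun j => ξ j x) i,
    fun i => ⟨_, (Tuple.lipschitzWith_orderStat i).comp hξ_pi⟩,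
    fun i j hij x => Tuple.monotone_orderStat _ hij, ?_⟩
  ext ⟨x, y⟩
  simpa only [Set.mem_iUnion, Set.mem_ofPred_eq, Set.mem_range, eq_comm] using
    Set.ext_iff.1 (Tuple.range_orderStat fun j => ξ j x).symm y
end

section
/- Let θ : ℝ^{n-1} → ℝ be an L-Lipschitz function and let W be a subset of the graph of θ in ℝⁿ. Then for every q = (x, y) ∈ ℝ^{n-1} × ℝ, the distance d(q, W) is equivalent to |y − θ(x)| + d(x, π(W)), where π : ℝⁿ → ℝ^{n-1} is the projection; that is, there is a constant C (depending only on L) with (1/C)(|y − θ(x)| + d(x, π(W))) ≤ d(q, W) ≤ C(|y − θ(x)| + d(x, π(W))). -/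
open scoped NNReal

/-- If W is a nonempty subset of the graph of an L-Lipschitz function
θ : ℝ^{n-1} → ℝ, then for q = (x,y), the distance d(q,W) is equivalent (with a constant
C depending only on L, hence chosen uniformly in θ and W) to
|y − θ(x)| + d(x, π(W)), where π is the projection onto ℝ^{n-1}. -/
theorem stmt5 {m : ℕ} (L : ℝ≥0) :
    ∃ C : ℝ, 0 < C ∧
      ∀ θ : EuclideanSpace ℝ (Fin m) → ℝ, LipschitzWith L θ →
        ∀ W : Set (EuclideanSpace ℝ (Fin m) × ℝ), W.Nonempty →
          W ⊆ {p : EuclideanSpace ℝ (Fin m) × ℝ | p.2 = θ p.1} →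
          ∀ x : EuclideanSpace ℝ (Fin m), ∀ y : ℝ,
            (1 / C) * (|y - θ x| + Metric.infDist x (Prod.fst '' W)) ≤
                Metric.infDist (x, y) W ∧
              Metric.infDist (x, y) W ≤
                C * (|y - θ x| + Metric.infDist x (Prod.fst '' W)) := by
  have hL0 : (0:ℝ) ≤ L := L.coe_nonneg
  refine ⟨(L:ℝ) + 2, by positivity, ?_⟩
  intro θ hθ W hW hWg x y
  set C : ℝ := (L:ℝ) + 2 with hCdef
  have hC0 : (0:ℝ) < C := by positivity
  have hd0 : 0 ≤ Metric.infDist x (Prod.fst '' W) := Metric.infDist_nonneg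
  -- key estimate for lower bound
  have key : ∀ w ∈ W, |y - θ x| + Metric.infDist x (Prod.fst '' W) ≤ C * dist (x, y) w := by
    intro w hw
    have hw2 : w.2 = θ w.1 := hWg hw
    have h1 : Metric.infDist x (Prod.fst '' W) ≤ dist x w.1 :=
      Metric.infDist_le_dist_of_mem ⟨w, hw, rfl⟩
    have hlip : dist (θ w.1) (θ x) ≤ (L:ℝ) * dist w.1 x := hθ.dist_le_mul w.1 x
    have h2 : |y - θ x| ≤ dist y w.2 + (L:ℝ) * dist x w.1 := by
      rw [hw2, Real.dist_eq]
      have h3 : |y - θ x| ≤ |y - θ w.1| + |θ w.1 - θ x| := abs_sub_le _ _ _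
      have h4 : |θ w.1 - θ x| ≤ (L:ℝ) * dist x w.1 := by
        rw [← Real.dist_eq, dist_comm x w.1]; exact hlip
      linarith
    have hf : dist x w.1 ≤ dist (x, y) w := by
      rw [Prod.dist_eq]; exact le_max_left _ _
    have hs : dist y w.2 ≤ dist (x, y) w := by
      rw [Prod.dist_eq]; exact le_max_right _ _
    nlinarith [dist_nonneg (x := (x, y)) (y := w)]
  constructor
  · -- lower bound
    by_contra h
    push_neg at h
    have h' : Metric.infDist (x, y) W <
        (1 / C) * (|y - θ x| + Metric.infDist x (Prod.fst '' W)) := h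
    obtain ⟨w, hw, hwd⟩ := (Metric.infDist_lt_iff hW).mp h'
    have hk := key w hw
    rw [one_div, inv_mul_eq_div, lt_div_iff₀ hC0, mul_comm] at hwd
    linarith
  · -- upper bound
    refine le_of_forall_pos_le_add ?_
    intro ε hε
    have hε' : 0 < ε / C := by positivity
    have hlt : Metric.infDist x (Prod.fst '' W) <
        Metric.infDist x (Prod.fst '' W) + ε / C := by linarith
    obtain ⟨z, hz, hdz⟩ := (Metric.infDist_lt_iff (hW.image Prod.fst)).mp hlt
    obtain ⟨w, hw, rfl⟩ := hz
    have hw2 : w.2 = θ w.1 := hWg hw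
    have hle : Metric.infDist (x, y) W ≤ dist (x, y) w := Metric.infDist_le_dist_of_mem hw
    have hdist : dist (x, y) w ≤ |y - θ x| + ((L:ℝ) + 1) * dist x w.1 := by
      rw [Prod.dist_eq]
      refine max_le ?_ ?_
      · nlinarith [dist_nonneg (x := x) (y := w.1), abs_nonneg (y - θ x)]
      · rw [hw2, Real.dist_eq]
        have h3 : |y - θ w.1| ≤ |y - θ x| + |θ x - θ w.1| := abs_sub_le _ _ _
        have h4 : |θ x - θ w.1| ≤ (L:ℝ) * dist x w.1 := by
          rw [← Real.dist_eq]; exact hθ.dist_le_mul x w.1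
        nlinarith [dist_nonneg (x := x) (y := w.1)]
    have hC1 : (L:ℝ) + 1 ≤ C := by rw [hCdef]; linarith
    have hεC : ((L:ℝ) + 1) * (ε / C) ≤ ε := by
      rw [mul_div_assoc']
      exact (div_le_iff₀ hC0).mpr (by nlinarith)
    have habs : 0 ≤ |y - θ x| := abs_nonneg _
    nlinarith [dist_nonneg (x := x) (y := w.1)]
end

section
/- Let K be a smooth manifold and ω a smooth closed L∞ j-form on K (i.e. sup-norm of ω finite). If r : K × [0,1] → K is a smooth homotopy with r(·,1) = id, r(·,0) constant, and with uniformly bounded differential, then the form α(x) = ∫₀¹ ω₂(x,t) dt, where r*ω = ω₁ + dt ∧ ω₂, is L∞ with |α|_∞ ≤ C·|ω|_∞ for a constant C depending only on the bound on dr. -/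
open scoped BigOperators

noncomputable section

variable {N j : ℕ}

/-- Let U ⊆ ℝᴺ be a smooth manifold (an open set with the induced metric),
ω a smooth closed (j+1)-form on U (represented as a continuous multilinear, pointwise
alternating, map) with sup-norm bound B, and r : U × [0,1] → U a smooth homotopy with
r(·,1) = id, r(·,0) ≡ c, whose differential is uniformly bounded by L. Then the j-form
α(x) = ∫₀¹ ω₂(x,t) dt (where r*ω = ω₁ + dt ∧ ω₂, i.e. ω₂ is obtained by plugging ∂r/∂t
into the pullback) satisfies the L∞ bound |α(x)(v)| ≤ L^{j+1}·B·∏‖vᵢ‖, i.e.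
|α|_∞ ≤ C·|ω|_∞ with C depending only on the bound on dr. -/
theorem stmt15 (U : Set (EuclideanSpace ℝ (Fin N))) (hU : IsOpen U)
    (ω : EuclideanSpace ℝ (Fin N) →
      ContinuousMultilinearMap ℝ (fun _ : Fin (j + 1) => EuclideanSpace ℝ (Fin N)) ℝ)
    (B L : ℝ) (hB : 0 ≤ B) (hL : 0 ≤ L)
    (hωsmooth : ContDiffOn ℝ (⊤ : ℕ∞) ω U)
    (hωalt : ∀ x ∈ U, ∀ v : Fin (j + 1) → EuclideanSpace ℝ (Fin N),
      ∀ i i' : Fin (j + 1), i ≠ i' → v i = v i' → ω x v = 0)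
    (hωbound : ∀ x ∈ U, ‖ω x‖ ≤ B)
    (hωclosed : ∀ x ∈ U, ∀ v : Fin (j + 2) → EuclideanSpace ℝ (Fin N),
      ∑ i : Fin (j + 2), (-1 : ℝ) ^ (i : ℕ) *
        (fderiv ℝ ω x (v i)) (v ∘ i.succAbove) = 0)
    (r : EuclideanSpace ℝ (Fin N) × ℝ → EuclideanSpace ℝ (Fin N)) (c : EuclideanSpace ℝ (Fin N))
    (hrsmooth : ContDiffOn ℝ (⊤ : ℕ∞) r (U ×ˢ Set.Icc (0 : ℝ) 1))
    (hrU : ∀ x ∈ U, ∀ t ∈ Set.Icc (0 : ℝ) 1, r (x, t) ∈ U)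
    (hr1 : ∀ x ∈ U, r (x, 1) = x) (hr0 : ∀ x ∈ U, r (x, 0) = c)
    (hdr : ∀ x ∈ U, ∀ t ∈ Set.Icc (0 : ℝ) 1, ‖fderiv ℝ r (x, t)‖ ≤ L)
    (α : EuclideanSpace ℝ (Fin N) → (Fin j → EuclideanSpace ℝ (Fin N)) → ℝ)
    (hα : ∀ x v, α x v = ∫ t in (0 : ℝ)..1,
      ω (r (x, t)) (Fin.cons (fderiv ℝ r (x, t) (0, 1))
        (fun i => fderiv ℝ r (x, t) (v i, 0)))) :
    ∀ x ∈ U, ∀ v : Fin j → EuclideanSpace ℝ (Fin N),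
      |α x v| ≤ L ^ (j + 1) * B * ∏ i, ‖v i‖ := by
  intro x hx v
  rw [hα x v]
  have key : ∀ t ∈ Set.uIoc (0:ℝ) 1,
      ‖ω (r (x, t)) (Fin.cons (fderiv ℝ r (x, t) (0, 1))
        (fun i => fderiv ℝ r (x, t) (v i, 0)))‖ ≤ L ^ (j + 1) * B * ∏ i, ‖v i‖ := by
    intro t ht
    rw [Set.uIoc_of_le zero_le_one] at ht
    have ht' : t ∈ Set.Icc (0:ℝ) 1 := ⟨le_of_lt ht.1, ht.2⟩
    have hru : r (x, t) ∈ U := hrU x hx t ht'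
    have hdrb : ‖fderiv ℝ r (x, t)‖ ≤ L := hdr x hx t ht'
    set m : Fin (j + 1) → EuclideanSpace ℝ (Fin N) :=
      Fin.cons (fderiv ℝ r (x, t) (0, 1)) (fun i => fderiv ℝ r (x, t) (v i, 0)) with hm
    have h0 : ‖m 0‖ ≤ L := by
      have := (fderiv ℝ r (x, t)).le_opNorm ((0 : EuclideanSpace ℝ (Fin N)), (1 : ℝ))
      have hn : ‖((0 : EuclideanSpace ℝ (Fin N)), (1 : ℝ))‖ = 1 := by
        simp [Prod.norm_def]
      rw [hn, mul_one] at this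
      simpa [hm] using this.trans hdrb
    have hs : ∀ i : Fin j, ‖m i.succ‖ ≤ L * ‖v i‖ := by
      intro i
      have := (fderiv ℝ r (x, t)).le_opNorm ((v i, (0 : ℝ)))
      have hn : ‖((v i, (0 : ℝ)))‖ = ‖v i‖ := by
        simp [Prod.norm_def]
      rw [hn] at this
      have : ‖m i.succ‖ ≤ ‖fderiv ℝ r (x, t)‖ * ‖v i‖ := by simpa [hm] using this
      exact this.trans (mul_le_mul_of_nonneg_right hdrb (norm_nonneg _))
    have hprod : ∏ i, ‖m i‖ ≤ L * ∏ i : Fin j, (L * ‖v i‖) := by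
      rw [Fin.prod_univ_succ]
      exact mul_le_mul h0 (Finset.prod_le_prod (fun i _ => norm_nonneg _)
        (fun i _ => hs i)) (Finset.prod_nonneg (fun i _ => norm_nonneg _)) hL
    calc ‖ω (r (x, t)) m‖ ≤ ‖ω (r (x, t))‖ * ∏ i, ‖m i‖ :=
          (ω (r (x, t))).le_opNorm m
      _ ≤ B * (L * ∏ i : Fin j, (L * ‖v i‖)) :=
          mul_le_mul (hωbound _ hru) hprod
            (Finset.prod_nonneg (fun i _ => norm_nonneg _)) hB
      _ = L ^ (j + 1) * B * ∏ i, ‖v i‖ := by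
          rw [Finset.prod_mul_distrib, Finset.prod_const]
          simp [pow_succ]
          ring
  have := intervalIntegral.norm_integral_le_of_norm_le_const key
  simpa [Real.norm_eq_abs] using this


end
end
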